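/- arXiv:2501.06094 — 2 statements merged into one kernel-verified Lean document; each statement's English description precedes it below -/
import Mathlib

section
/- Let D and Δ be positive-definite diagonal matrices of sizes m×m and p×p, β ∈ R^m, γ ∈ R^p, and let (T, Λ, ν, Θ, κ, Φ) be CFA parameters with Θ diagonal positive definite. Define transformed parameters T̃ = γ1' + Δ^{-1}T, Λ̃ = Δ^{-1}ΛD, ν̃ = Δ^{-1}ν + Δ^{-1}Λβ + γ, Θ̃ = Δ^{-1}ΘΔ^{-1}, κ̃ = D^{-1}(κ − β), Φ̃ = D^{-1}ΦD^{-1}. Then the transformed model implies the same distribution of ordinal responses, i.e., Φ((τ̃_{jk} − (ν̃_j + Λ̃_j κ̃))/√(Λ̃_j Φ̃ Λ̃_j' + θ̃_{jj})) = Φ((τ_{jk} − (ν_j + Λ_j κ))/√(Λ_j Φ Λ_j' + θ_{jj})) for all items j and thresholds k. -/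
open scoped BigOperators Matrix

/-- The standard normal cumulative distribution function Φ. -/
noncomputable def stdNormCDF (x : ℝ) : ℝ :=
  ∫ t in Set.Iic x, Real.exp (-t ^ 2 / 2) / Real.sqrt (2 * Real.pi)

/-- The Wu–Estabrook transformation (D, Δ, β, γ), with D and Δ positive
diagonal, applied to ordinal CFA parameters (T, Λ, ν, Θ, κ, Φ_lv) with Θ
diagonal positive definite, yields the same implied marginal probabilities of
the ordinal responses: for each item j and threshold k,
Φ((τ̃_{jk} − (ν̃_j + Λ̃_j κ̃)) / √(Λ̃_j Φ̃ Λ̃_j' + θ̃_{jj}))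
  = Φ((τ_{jk} − (ν_j + Λ_j κ)) / √(Λ_j Φ Λ_j' + θ_{jj})). -/
theorem wu_estabrook_transformation_same_distribution
    (p m Km : ℕ)
    (T : Matrix (Fin p) (Fin Km) ℝ)
    (Λ : Matrix (Fin p) (Fin m) ℝ)
    (ν : Fin p → ℝ)
    (Θ : Matrix (Fin p) (Fin p) ℝ)
    (κ : Fin m → ℝ)
    (Φlv : Matrix (Fin m) (Fin m) ℝ)
    (hΘdiag : ∀ i j, i ≠ j → Θ i j = 0)
    (hΘpos : ∀ j, 0 < Θ j j)
    (hΦlv : Φlv.PosDef)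
    (d : Fin m → ℝ) (δ : Fin p → ℝ)
    (hd : ∀ q, 0 < d q) (hδ : ∀ j, 0 < δ j)
    (β : Fin m → ℝ) (γ : Fin p → ℝ) :
    ∀ (j : Fin p) (k : Fin Km),
      stdNormCDF
        ((((fun j' k' => γ j' + (δ j')⁻¹ * T j' k') : Matrix (Fin p) (Fin Km) ℝ) j k -
            ((fun j' => (δ j')⁻¹ * ν j' + (δ j')⁻¹ * (Λ.mulVec β) j' + γ j') j +
              ((Matrix.diagonal fun j' => (δ j')⁻¹) * Λ * Matrix.diagonal d).mulVec
                (fun q => (d q)⁻¹ * (κ q - β q)) j)) /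
          Real.sqrt
            ((((Matrix.diagonal fun j' => (δ j')⁻¹) * Λ * Matrix.diagonal d) *
                ((Matrix.diagonal fun q => (d q)⁻¹) * Φlv * Matrix.diagonal fun q => (d q)⁻¹) *
                ((Matrix.diagonal fun j' => (δ j')⁻¹) * Λ * Matrix.diagonal d)ᵀ) j j +
              ((Matrix.diagonal fun j' => (δ j')⁻¹) * Θ * Matrix.diagonal fun j' => (δ j')⁻¹) j j))
        =
      stdNormCDF
        ((T j k - (ν j + Λ.mulVec κ j)) /
          Real.sqrt ((Λ * Φlv * Λᵀ) j j + Θ j j)) := by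
  intro j k
  have hdne : ∀ q, d q ≠ 0 := fun q => (hd q).ne'
  have hδj : (0:ℝ) < (δ j)⁻¹ := inv_pos.mpr (hδ j)
  -- diagonal d * diagonal d⁻¹ = 1
  have hDD : (Matrix.diagonal d : Matrix (Fin m) (Fin m) ℝ) *
      (Matrix.diagonal fun q => (d q)⁻¹) = 1 := by
    rw [Matrix.diagonal_mul_diagonal]
    ext i j
    rcases eq_or_ne i j with h | h
    · subst h; simp [mul_inv_cancel₀ (hdne i)]
    · simp [Matrix.diagonal_apply_ne _ h, Matrix.one_apply_ne h]
  -- the A Φ̃ Aᵀ term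
  have hvar :
      (((Matrix.diagonal fun j' => (δ j')⁻¹) * Λ * Matrix.diagonal d) *
        ((Matrix.diagonal fun q => (d q)⁻¹) * Φlv * Matrix.diagonal fun q => (d q)⁻¹) *
        ((Matrix.diagonal fun j' => (δ j')⁻¹) * Λ * Matrix.diagonal d)ᵀ) =
      (Matrix.diagonal fun j' => (δ j')⁻¹) * (Λ * Φlv * Λᵀ) *
        (Matrix.diagonal fun j' => (δ j')⁻¹) := by
    have hDDt : (Matrix.diagonal fun q => (d q)⁻¹ : Matrix (Fin m) (Fin m) ℝ) *
        (Matrix.diagonal d) = 1 := by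
      rw [Matrix.diagonal_mul_diagonal]
      ext i j
      rcases eq_or_ne i j with h | h
      · subst h; simp [inv_mul_cancel₀ (hdne i)]
      · simp [Matrix.diagonal_apply_ne _ h, Matrix.one_apply_ne h]
    rw [Matrix.transpose_mul, Matrix.transpose_mul, Matrix.diagonal_transpose,
      Matrix.diagonal_transpose]
    calc (Matrix.diagonal fun j' => (δ j')⁻¹) * Λ * Matrix.diagonal d *
          ((Matrix.diagonal fun q => (d q)⁻¹) * Φlv * Matrix.diagonal fun q => (d q)⁻¹) *
          ((Matrix.diagonal d) * (Λᵀ * (Matrix.diagonal fun j' => (δ j')⁻¹)))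
        = (Matrix.diagonal fun j' => (δ j')⁻¹) * Λ *
            ((Matrix.diagonal d) * (Matrix.diagonal fun q => (d q)⁻¹)) * Φlv *
            ((Matrix.diagonal fun q => (d q)⁻¹) * (Matrix.diagonal d)) *
            (Λᵀ * (Matrix.diagonal fun j' => (δ j')⁻¹)) := by
          simp only [Matrix.mul_assoc]
      _ = _ := by rw [hDD, hDDt]; simp only [Matrix.mul_one, Matrix.mul_assoc]
  have hvarjj :
      (((Matrix.diagonal fun j' => (δ j')⁻¹) * Λ * Matrix.diagonal d) *
        ((Matrix.diagonal fun q => (d q)⁻¹) * Φlv * Matrix.diagonal fun q => (d q)⁻¹) *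
        ((Matrix.diagonal fun j' => (δ j')⁻¹) * Λ * Matrix.diagonal d)ᵀ) j j +
      ((Matrix.diagonal fun j' => (δ j')⁻¹) * Θ * Matrix.diagonal fun j' => (δ j')⁻¹) j j
      = ((δ j)⁻¹)^2 * ((Λ * Φlv * Λᵀ) j j + Θ j j) := by
    rw [hvar]
    have h1 : ((Matrix.diagonal fun j' => (δ j')⁻¹) * (Λ * Φlv * Λᵀ) *
        (Matrix.diagonal fun j' => (δ j')⁻¹)) j j = (δ j)⁻¹ * (Λ * Φlv * Λᵀ) j j * (δ j)⁻¹ := by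
      rw [Matrix.mul_diagonal, Matrix.diagonal_mul]
    have h2 : ((Matrix.diagonal fun j' => (δ j')⁻¹) * Θ *
        (Matrix.diagonal fun j' => (δ j')⁻¹)) j j = (δ j)⁻¹ * Θ j j * (δ j)⁻¹ := by
      rw [Matrix.mul_diagonal, Matrix.diagonal_mul]
    rw [h1, h2]; ring
  -- the mean term
  have hmean :
      ((Matrix.diagonal fun j' => (δ j')⁻¹) * Λ * Matrix.diagonal d).mulVec
        (fun q => (d q)⁻¹ * (κ q - β q)) j = (δ j)⁻¹ * Λ.mulVec (fun q => κ q - β q) j := by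
    have : (Matrix.diagonal d).mulVec (fun q => (d q)⁻¹ * (κ q - β q)) =
        fun q => κ q - β q := by
      funext q
      simp [Matrix.mulVec_diagonal, mul_inv_cancel_left₀ (hdne q)]
    rw [← Matrix.mulVec_mulVec, this, ← Matrix.mulVec_mulVec, Matrix.mulVec_diagonal]
  rw [hvarjj, hmean]
  congr 1
  have hnum : (γ j + (δ j)⁻¹ * T j k -
      ((δ j)⁻¹ * ν j + (δ j)⁻¹ * Λ.mulVec β j + γ j +
        (δ j)⁻¹ * Λ.mulVec (fun q => κ q - β q) j)) =
      (δ j)⁻¹ * (T j k - (ν j + Λ.mulVec κ j)) := by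
    have hlin : Λ.mulVec (fun q => κ q - β q) j = Λ.mulVec κ j - Λ.mulVec β j := by
      simp [Matrix.mulVec, dotProduct, mul_sub, Finset.sum_sub_distrib]
    rw [hlin]; ring
  rw [hnum, Real.sqrt_mul (sq_nonneg _), Real.sqrt_sq hδj.le,
    mul_div_mul_left _ _ (ne_of_gt hδj)]
end

section
/- Given parameters (T, Λ, ν, Θ, κ, Φ) of a one-factor ordinal CFA with K ≥ 3 categories and loadings λ_j ≠ 0 with Σ_j λ_j ≠ 0 and τ_{j(K−1)} > τ_{j1} for all j, define δ_jj = (τ_{j(K−1)} − τ_{j1})/(K − 2), D = p(Σ_j δ_jj^{-1} λ_j)^{-1}, γ_j = 1.5 − δ_jj^{-1} τ_{j1}, and β = −(Σ_j δ_jj^{-1} λ_j)^{-1} Σ_j (1.5 + δ_jj^{-1}(ν_j − τ_{j1})). Then the transformed parameters τ̃_{jk} = γ_j + δ_jj^{-1} τ_{jk}, λ̃_j = δ_jj^{-1} λ_j D, ν̃_j = δ_jj^{-1}(ν_j + λ_j β) + γ_j satisfy: τ̃_{j1} = 1.5 and τ̃_{j(K−1)} = K − 0.5 for all j, (1/p)Σ_j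 λ̃_j = 1, and Σ_j ν̃_j = 0. -/
/-! Each constraint is a field identity: `δ_jj⁻¹` maps the gap `τ_{j(K−1)} − τ_{j1}` to `K − 2`,
`D` is the reciprocal of the mean rescaled loading, and `β` is the one value for which the
intercept terms cancel in the sum. -/

open Finset

section
variable {ι 𝕜 : Type*} [Fintype ι] [Field 𝕜]

theorem inv_div_mul_self_of_ne_zero {x : 𝕜} (c : 𝕜) (hx : x ≠ 0) : (x / c)⁻¹ * x = c := by
  rw [inv_div, div_mul_cancel₀ _ hx]

theorem one_div_mul_sum_mul_mul_inv_sum {n : 𝕜} {w : ι → 𝕜} (hn : n ≠ 0) (hw : ∑ i, w i ≠ 0) :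
    1 / n * ∑ j, w j * (n * (∑ i, w i)⁻¹) = 1 := by
  rw [← sum_mul]
  field_simp

theorem sum_add_mul_neg_inv_sum_mul_sum {w : ι → 𝕜} (a : ι → 𝕜) (hw : ∑ i, w i ≠ 0) :
    ∑ j, (a j + w j * (-(∑ i, w i)⁻¹ * ∑ i, a i)) = 0 := by
  rw [sum_add_distrib, ← sum_mul]
  field_simp
  ring

end

theorem explicit_transformation_satisfies_integer_constraints_general
    (p K : ℕ) (hp : 0 < p)
    (lam ν τ1 τK1 : Fin p → ℝ)
    (hτ : ∀ j, τ1 j < τK1 j)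
    (hs : ∑ j, ((τK1 j - τ1 j) / ((K : ℝ) - 2))⁻¹ * lam j ≠ 0) :
    (∀ j, (1.5 - ((τK1 j - τ1 j) / ((K : ℝ) - 2))⁻¹ * τ1 j) +
        ((τK1 j - τ1 j) / ((K : ℝ) - 2))⁻¹ * τ1 j = 1.5) ∧
    (∀ j, (1.5 - ((τK1 j - τ1 j) / ((K : ℝ) - 2))⁻¹ * τ1 j) +
        ((τK1 j - τ1 j) / ((K : ℝ) - 2))⁻¹ * τK1 j = (K : ℝ) - 0.5) ∧
    ((1 / (p : ℝ)) * ∑ j, ((τK1 j - τ1 j) / ((K : ℝ) - 2))⁻¹ * lam j *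
        ((p : ℝ) * (∑ i, ((τK1 i - τ1 i) / ((K : ℝ) - 2))⁻¹ * lam i)⁻¹) = 1) ∧
    (∑ j, (((τK1 j - τ1 j) / ((K : ℝ) - 2))⁻¹ *
        (ν j + lam j * (-(∑ i, ((τK1 i - τ1 i) / ((K : ℝ) - 2))⁻¹ * lam i)⁻¹ *
          ∑ i, (1.5 + ((τK1 i - τ1 i) / ((K : ℝ) - 2))⁻¹ * (ν i - τ1 i)))) +
        (1.5 - ((τK1 j - τ1 j) / ((K : ℝ) - 2))⁻¹ * τ1 j)) = 0) := by
  refine ⟨fun j => by ring, fun j => ?_, one_div_mul_sum_mul_mul_inv_sum (by positivity) hs, ?_⟩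
  · have hgap := inv_div_mul_self_of_ne_zero ((K : ℝ) - 2) (sub_ne_zero.2 (hτ j).ne')
    linear_combination hgap
  · refine (sum_congr rfl fun j _ => ?_).trans (sum_add_mul_neg_inv_sum_mul_sum
      (fun i => 1.5 + ((τK1 i - τ1 i) / ((K : ℝ) - 2))⁻¹ * (ν i - τ1 i)) hs)
    ring

/-- The explicit Wu–Estabrook transformation mapping traditionally-identified
one-factor ordinal CFA parameters to integer-constrained parameters:
with δ_jj = (τ_{j(K−1)} − τ_{j1})/(K − 2), D = p (Σ δ_jj⁻¹ λ_j)⁻¹,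
γ_j = 1.5 − δ_jj⁻¹ τ_{j1}, β = −(Σ δ_jj⁻¹ λ_j)⁻¹ Σ (1.5 + δ_jj⁻¹(ν_j − τ_{j1})),
the transformed parameters satisfy the integer constraints:
τ̃_{j1} = 1.5, τ̃_{j(K−1)} = K − 0.5, (1/p) Σ λ̃_j = 1, Σ ν̃_j = 0. -/
theorem explicit_transformation_satisfies_integer_constraints
    (p K : ℕ) (hp : 0 < p) (hK : 3 ≤ K)
    (lam ν τ1 τK1 : Fin p → ℝ)
    (hτ : ∀ j, τ1 j < τK1 j)
    (hlam : ∀ j, lam j ≠ 0)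
    (hlsum : ∑ j, lam j ≠ 0)
    (hs : ∑ j, ((τK1 j - τ1 j) / ((K : ℝ) - 2))⁻¹ * lam j ≠ 0) :
    (∀ j, (1.5 - ((τK1 j - τ1 j) / ((K : ℝ) - 2))⁻¹ * τ1 j) +
        ((τK1 j - τ1 j) / ((K : ℝ) - 2))⁻¹ * τ1 j = 1.5) ∧
    (∀ j, (1.5 - ((τK1 j - τ1 j) / ((K : ℝ) - 2))⁻¹ * τ1 j) +
        ((τK1 j - τ1 j) / ((K : ℝ) - 2))⁻¹ * τK1 j = (K : ℝ) - 0.5) ∧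
    ((1 / (p : ℝ)) * ∑ j, ((τK1 j - τ1 j) / ((K : ℝ) - 2))⁻¹ * lam j *
        ((p : ℝ) * (∑ i, ((τK1 i - τ1 i) / ((K : ℝ) - 2))⁻¹ * lam i)⁻¹) = 1) ∧
    (∑ j, (((τK1 j - τ1 j) / ((K : ℝ) - 2))⁻¹ *
        (ν j + lam j * (-(∑ i, ((τK1 i - τ1 i) / ((K : ℝ) - 2))⁻¹ * lam i)⁻¹ *
          ∑ i, (1.5 + ((τK1 i - τ1 i) / ((K : ℝ) - 2))⁻¹ * (ν i - τ1 i)))) +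
        (1.5 - ((τK1 j - τ1 j) / ((K : ℝ) - 2))⁻¹ * τ1 j)) = 0) :=
  explicit_transformation_satisfies_integer_constraints_general p K hp lam ν τ1 τK1 hτ hs
end
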